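/- (Auslander–Yorke dichotomy for ρ_FK) A transitive TDS is almost FK-continuous if and only if it is not FK-sensitive; a minimal TDS is FK-continuous if and only if it is not FK-sensitive. -/

import Mathlib

open Filter Topology MeasureTheory Set

namespace FKPaper

variable {X : Type*} [MetricSpace X]

/-- The maximal fit of an `(n,δ)`-match between the orbits of `x` and `z` under `T`:
the largest cardinality of the domain of an order-preserving bijection
`π : D → R`, with `D, R ⊆ {0,…,n-1}` and `dist (T^[i] x) (T^[π i] z) < δ` for `i ∈ D`. -/
noncomputable def maxFit (T : X → X) (δ : ℝ) (n : ℕ) (x z : X) : ℕ :=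
  sSup {k : ℕ | ∃ i j : Fin k → ℕ, StrictMono i ∧ StrictMono j ∧
    (∀ s, i s < n) ∧ (∀ s, j s < n) ∧ ∀ s, dist (T^[i s] x) (T^[j s] z) < δ}

/-- `f̄_{n,δ}(x,z) = 1 - (maximal fit of an (n,δ)-match of x and z)/n`. -/
noncomputable def fbarN (T : X → X) (δ : ℝ) (n : ℕ) (x z : X) : ℝ :=
  1 - (maxFit T δ n x z : ℝ) / n

/-- `f̄_δ(x,z) = limsup_{n→∞} f̄_{n,δ}(x,z)`. -/
noncomputable def fbar (T : X → X) (δ : ℝ) (x z : X) : ℝ :=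
  Filter.limsup (fun n => fbarN T δ n x z) Filter.atTop

/-- The Feldman–Katok pseudometric `ρ_FK(x,z) = inf {δ > 0 : f̄_δ(x,z) < δ}`. -/
noncomputable def rhoFK (T : X → X) (x z : X) : ℝ :=
  sInf {δ : ℝ | 0 < δ ∧ fbar T δ x z < δ}

/-- `x` is an FK-continuity point for `(X,T)`. -/
def FKContinuityPoint (T : X → X) (x : X) : Prop :=
  ∀ ε > 0, ∃ δ > 0, ∀ y : X, dist x y ≤ δ → rhoFK T x y ≤ ε

/-- The set of FK-continuity points. -/
def EqFK (T : X → X) : Set X := {x : X | FKContinuityPoint T x}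

/-- Topological transitivity. -/
def IsTransitive (T : X → X) : Prop :=
  ∀ U V : Set X, IsOpen U → IsOpen V → U.Nonempty → V.Nonempty →
    ∃ n : ℕ, 0 < n ∧ ((T^[n]) ⁻¹' U ∩ V).Nonempty

/-- Minimality: every forward orbit is dense. -/
def IsMinimal (T : X → X) : Prop :=
  ∀ x : X, Dense {y : X | ∃ n : ℕ, T^[n] x = y}

/-- FK-sensitivity: some `ε > 0` works for every nonempty open set. -/
def FKSensitive (T : X → X) : Prop :=
  ∃ ε > 0, ∀ U : Set X, IsOpen U → U.Nonempty →
    ∃ x ∈ U, ∃ y ∈ U, ε < rhoFK T x y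

end FKPaper

open FKPaper Filter Topology MeasureTheory Set

/-!
The Feldman–Katok pseudometric `ρ_FK` is symmetric, satisfies the triangle inequality (matches
compose through the middle orbit, losing at most `n` of the fits), and does not decrease
along orbits: `ρ_FK(x, z) ≤ ρ_FK(Tⁿx, Tⁿz)`, since an
`(m,δ)`-match of `Tⁿx, Tⁿz` is an `(m+n,δ)`-match of `x, z`.

Without FK-sensitivity, every `ε > 0` admits a nonempty open set of `ρ_FK`-diameter `≤ ε`, and
by the last inequality so do its preimages under `Tⁿ`. Under transitivity these preimages
cover a dense open set, and the `Gδ` intersection over `ε = 1/(k+1)` consists of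
FK-continuity points; under minimality every point falls in such a preimage. Conversely, by
the triangle inequality an FK-continuity point rules out FK-sensitivity.
-/

open scoped Pointwise

namespace FKPaper

variable {X : Type*} [MetricSpace X] {T : X → X} {δ δ' ε ε' : ℝ} {k m n : ℕ} {x y z : X}

section Matches

def fitSet (T : X → X) (δ : ℝ) (n : ℕ) (x z : X) : Set ℕ :=
  {k : ℕ | ∃ i j : Fin k → ℕ, StrictMono i ∧ StrictMono j ∧
    (∀ s, i s < n) ∧ (∀ s, j s < n) ∧ ∀ s, dist (T^[i s] x) (T^[j s] z) < δ}

lemma zero_mem_fitSet : 0 ∈ fitSet T δ n x z :=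
  ⟨Fin.elim0, Fin.elim0, fun a => a.elim0, fun a => a.elim0, fun a => a.elim0,
    fun a => a.elim0, fun a => a.elim0⟩

lemma le_of_mem_fitSet (h : k ∈ fitSet T δ n x z) : k ≤ n := by
  obtain ⟨i, -, hi, -, hin, -, -⟩ := h
  have hinj : Function.Injective fun s : Fin k => (⟨i s, hin s⟩ : Fin n) :=
    fun a b hab => hi.injective (congrArg Fin.val hab)
  simpa using Fintype.card_le_of_injective _ hinj

lemma bddAbove_fitSet : BddAbove (fitSet T δ n x z) :=
  ⟨n, fun _ hk => le_of_mem_fitSet hk⟩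

lemma maxFit_mem_fitSet : maxFit T δ n x z ∈ fitSet T δ n x z :=
  Nat.sSup_mem ⟨0, zero_mem_fitSet⟩ bddAbove_fitSet

lemma le_maxFit (h : k ∈ fitSet T δ n x z) : k ≤ maxFit T δ n x z :=
  le_csSup bddAbove_fitSet h

lemma maxFit_le : maxFit T δ n x z ≤ n :=
  le_of_mem_fitSet maxFit_mem_fitSet

lemma maxFit_comm : maxFit T δ n x z = maxFit T δ n z x := by
  have key : ∀ {x z : X}, fitSet T δ n x z ⊆ fitSet T δ n z x := by
    rintro x z k ⟨i, j, hi, hj, hin, hjn, hd⟩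
    exact ⟨j, i, hj, hi, hjn, hin, fun s => dist_comm (T^[i s] x) _ ▸ hd s⟩
  exact congrArg sSup (key.antisymm key)

lemma mem_fitSet_add_of_mem_fitSet_iterate (h : k ∈ fitSet T δ m (T^[n] x) (T^[n] z)) :
    k ∈ fitSet T δ (m + n) x z := by
  obtain ⟨i, j, hi, hj, hin, hjn, hd⟩ := h
  refine ⟨(· + n) ∘ i, (· + n) ∘ j, (add_left_strictMono).comp hi, (add_left_strictMono).comp hj,
    fun s => Nat.add_lt_add_right (hin s) n, fun s => Nat.add_lt_add_right (hjn s) n,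
    fun s => ?_⟩
  simpa only [Function.comp_apply, Function.iterate_add_apply] using hd s

lemma exists_strictMono_comp_eq_orderEmbOfFin {f : Fin k → ℕ} (hf : StrictMono f)
    {C : Finset ℕ} (hC : C ⊆ Finset.univ.image f) :
    ∃ σ : Fin C.card → Fin k, StrictMono σ ∧ ∀ s, f (σ s) = C.orderEmbOfFin rfl s := by
  choose σ hσ using fun s => by simpa using hC (C.orderEmbOfFin_mem rfl s)
  refine ⟨σ, fun a b hab => hf.lt_iff_lt.1 ?_, hσ⟩
  rw [hσ, hσ]
  exact (C.orderEmbOfFin rfl).strictMono hab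

/-- Two matches compose along the times at which the first one lands and the second one starts,
and at most `n` such times can be missing from the intersection. -/
lemma add_le_add_maxFit_of_mem_fitSet {k₁ k₂ : ℕ} (h₁ : k₁ ∈ fitSet T δ n x y)
    (h₂ : k₂ ∈ fitSet T δ' n y z) : k₁ + k₂ ≤ n + maxFit T (δ + δ') n x z := by
  classical
  obtain ⟨i₁, j₁, hi₁, hj₁, hi₁n, hj₁n, hd₁⟩ := h₁
  obtain ⟨i₂, j₂, hi₂, hj₂, hi₂n, hj₂n, hd₂⟩ := h₂
  set A := Finset.univ.image j₁
  set B := Finset.univ.image i₂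
  have hA : A.card = k₁ := by simp [A, Finset.card_image_of_injective _ hj₁.injective]
  have hB : B.card = k₂ := by simp [B, Finset.card_image_of_injective _ hi₂.injective]
  have hAB : (A ∪ B).card ≤ n := by
    refine (Finset.card_le_card fun t ht => ?_).trans (Finset.card_range n).le
    rcases Finset.mem_union.1 ht with h | h <;> obtain ⟨s, -, rfl⟩ := Finset.mem_image.1 h
    exacts [Finset.mem_range.2 (hj₁n s), Finset.mem_range.2 (hi₂n s)]
  obtain ⟨σ, hσ, hσC⟩ := exists_strictMono_comp_eq_orderEmbOfFin hj₁ Finset.inter_subset_left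
  obtain ⟨τ, hτ, hτC⟩ := exists_strictMono_comp_eq_orderEmbOfFin hi₂ Finset.inter_subset_right
  have hC : (A ∩ B).card ∈ fitSet T (δ + δ') n x z := by
    refine ⟨i₁ ∘ σ, j₂ ∘ τ, hi₁.comp hσ, hj₂.comp hτ, fun s => hi₁n _, fun s => hj₂n _,
      fun s => ?_⟩
    have hmid : j₁ (σ s) = i₂ (τ s) := (hσC s).trans (hτC s).symm
    calc dist (T^[i₁ (σ s)] x) (T^[j₂ (τ s)] z)
        ≤ dist (T^[i₁ (σ s)] x) (T^[j₁ (σ s)] y) + dist (T^[i₂ (τ s)] y) (T^[j₂ (τ s)] z) :=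
          hmid ▸ dist_triangle _ _ _
      _ < δ + δ' := add_lt_add (hd₁ _) (hd₂ _)
  have := Finset.card_union_add_card_inter A B
  have := le_maxFit hC
  omega

lemma maxFit_add_maxFit_le :
    maxFit T δ n x y + maxFit T δ' n y z ≤ n + maxFit T (δ + δ') n x z :=
  add_le_add_maxFit_of_mem_fitSet maxFit_mem_fitSet maxFit_mem_fitSet

lemma maxFit_iterate_le : maxFit T δ m (T^[n] x) (T^[n] z) ≤ maxFit T δ (m + n) x z :=
  le_maxFit (mem_fitSet_add_of_mem_fitSet_iterate maxFit_mem_fitSet)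

end Matches

section Fbar

lemma fbarN_nonneg : 0 ≤ fbarN T δ n x z := by
  rw [fbarN, sub_nonneg]
  exact div_le_one_of_le₀ (Nat.cast_le.2 maxFit_le) n.cast_nonneg

lemma fbarN_le_one : fbarN T δ n x z ≤ 1 :=
  sub_le_self _ (by positivity)

lemma isBoundedUnder_ge_fbarN : IsBoundedUnder (· ≥ ·) atTop fun n => fbarN T δ n x z :=
  isBoundedUnder_of ⟨0, fun _ => fbarN_nonneg⟩

lemma isBoundedUnder_le_fbarN : IsBoundedUnder (· ≤ ·) atTop fun n => fbarN T δ n x z :=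
  isBoundedUnder_of ⟨1, fun _ => fbarN_le_one⟩

lemma fbar_le_one : fbar T δ x z ≤ 1 :=
  limsup_le_of_le isBoundedUnder_ge_fbarN.isCoboundedUnder_le (.of_forall fun _ => fbarN_le_one)

lemma fbar_comm : fbar T δ x z = fbar T δ z x := by
  simp only [fbar, fbarN, maxFit_comm (x := x)]

lemma fbarN_add_le : fbarN T (δ + δ') n x z ≤ fbarN T δ n x y + fbarN T δ' n y z := by
  rcases n.eq_zero_or_pos with rfl | hn
  · simp [fbarN]
  have hfit : (maxFit T δ n x y : ℝ) + maxFit T δ' n y z ≤ n + maxFit T (δ + δ') n x z := by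
    exact_mod_cast maxFit_add_maxFit_le
  have hn' : (0 : ℝ) < n := Nat.cast_pos.2 hn
  have : ((maxFit T δ n x y : ℝ) + maxFit T δ' n y z) / n ≤ (n + maxFit T (δ + δ') n x z) / n :=
    div_le_div_of_nonneg_right hfit hn'.le
  rw [add_div, add_div, div_self hn'.ne'] at this
  simp only [fbarN]
  linarith

lemma fbar_add_le : fbar T (δ + δ') x z ≤ fbar T δ x y + fbar T δ' y z :=
  calc fbar T (δ + δ') x z
      ≤ limsup ((fun n => fbarN T δ n x y) + fun n => fbarN T δ' n y z) atTop :=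
        limsup_le_limsup (.of_forall fun _ => fbarN_add_le)
          isBoundedUnder_ge_fbarN.isCoboundedUnder_le
          (isBoundedUnder_le_add isBoundedUnder_le_fbarN isBoundedUnder_le_fbarN)
    _ ≤ fbar T δ x y + fbar T δ' y z :=
        limsup_add_le isBoundedUnder_ge_fbarN isBoundedUnder_le_fbarN
          isBoundedUnder_ge_fbarN.isCoboundedUnder_le isBoundedUnder_le_fbarN

/-- An `m`-match of the shifted orbits is an `(m + n)`-match of the original ones; the change
of normalisation costs at most `n / m`. -/
lemma fbarN_add_le_fbarN_iterate (hm : 0 < m) :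
    fbarN T δ (m + n) x z ≤ fbarN T δ m (T^[n] x) (T^[n] z) + n / m := by
  have hle : (maxFit T δ m (T^[n] x) (T^[n] z) : ℝ) ≤ maxFit T δ (m + n) x z :=
    Nat.cast_le.2 maxFit_iterate_le
  have hlem : (maxFit T δ m (T^[n] x) (T^[n] z) : ℝ) ≤ m := Nat.cast_le.2 maxFit_le
  have hm' : (0 : ℝ) < m := Nat.cast_pos.2 hm
  have key : ((maxFit T δ m (T^[n] x) (T^[n] z) : ℝ) - n) / m ≤
      maxFit T δ (m + n) x z / (m + n) := by
    rw [div_le_div_iff₀ hm' (by positivity)]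
    nlinarith [(n.cast_nonneg : (0 : ℝ) ≤ n)]
  simp only [fbarN, Nat.cast_add, sub_div] at key ⊢
  linarith

lemma fbar_le_fbar_iterate (n : ℕ) : fbar T δ x z ≤ fbar T δ (T^[n] x) (T^[n] z) := by
  have hw : Tendsto (fun m : ℕ => (n : ℝ) / m) atTop (𝓝 0) :=
    tendsto_const_div_atTop_nhds_zero_nat _
  have hw_ge : IsBoundedUnder (· ≥ ·) atTop fun m : ℕ => (n : ℝ) / m :=
    isBoundedUnder_of ⟨0, fun _ => by positivity⟩
  calc fbar T δ x z = limsup (fun m => fbarN T δ (m + n) x z) atTop :=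
        (limsup_nat_add (fun m => fbarN T δ m x z) n).symm
    _ ≤ limsup ((fun m => fbarN T δ m (T^[n] x) (T^[n] z)) + fun m : ℕ => (n : ℝ) / m) atTop :=
        limsup_le_limsup (eventually_atTop.2 ⟨1, fun _ hm => fbarN_add_le_fbarN_iterate hm⟩)
          (isBoundedUnder_of ⟨0, fun _ => fbarN_nonneg⟩).isCoboundedUnder_le
          (isBoundedUnder_le_add isBoundedUnder_le_fbarN hw.isBoundedUnder_le)
    _ ≤ fbar T δ (T^[n] x) (T^[n] z) + limsup (fun m : ℕ => (n : ℝ) / m) atTop :=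
        limsup_add_le isBoundedUnder_ge_fbarN isBoundedUnder_le_fbarN
          hw_ge.isCoboundedUnder_le hw.isBoundedUnder_le
    _ = fbar T δ (T^[n] x) (T^[n] z) := by rw [hw.limsup_eq, add_zero]

end Fbar

section RhoFK

def admissibleRadii (T : X → X) (x z : X) : Set ℝ := {δ | 0 < δ ∧ fbar T δ x z < δ}

lemma two_mem_admissibleRadii : (2 : ℝ) ∈ admissibleRadii T x z :=
  ⟨two_pos, fbar_le_one.trans_lt one_lt_two⟩

lemma bddBelow_admissibleRadii : BddBelow (admissibleRadii T x z) :=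
  ⟨0, fun _ h => h.1.le⟩

lemma rhoFK_le_rhoFK_of_forall_fbar_le {x' z' : X} (h : ∀ δ, fbar T δ x z ≤ fbar T δ x' z') :
    rhoFK T x z ≤ rhoFK T x' z' :=
  csInf_le_csInf bddBelow_admissibleRadii ⟨2, two_mem_admissibleRadii⟩
    fun δ hδ => ⟨hδ.1, (h δ).trans_lt hδ.2⟩

lemma rhoFK_comm : rhoFK T x z = rhoFK T z x :=
  (rhoFK_le_rhoFK_of_forall_fbar_le fun _ => fbar_comm.le).antisymm
    (rhoFK_le_rhoFK_of_forall_fbar_le fun _ => fbar_comm.le)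

lemma rhoFK_triangle : rhoFK T x z ≤ rhoFK T x y + rhoFK T y z := by
  change sInf (admissibleRadii T x z) ≤
    sInf (admissibleRadii T x y) + sInf (admissibleRadii T y z)
  rw [← csInf_add ⟨2, two_mem_admissibleRadii⟩ bddBelow_admissibleRadii
    ⟨2, two_mem_admissibleRadii⟩ bddBelow_admissibleRadii]
  refine csInf_le_csInf bddBelow_admissibleRadii
    (Set.add_nonempty.2 ⟨⟨2, two_mem_admissibleRadii⟩, ⟨2, two_mem_admissibleRadii⟩⟩) ?_
  rintro _ ⟨δ, ⟨hδ, hfδ⟩, δ', ⟨hδ', hfδ'⟩, rfl⟩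
  exact ⟨add_pos hδ hδ', fbar_add_le.trans_lt (add_lt_add hfδ hfδ')⟩

lemma rhoFK_le_rhoFK_iterate (n : ℕ) : rhoFK T x z ≤ rhoFK T (T^[n] x) (T^[n] z) :=
  rhoFK_le_rhoFK_of_forall_fbar_le fun _ => fbar_le_fbar_iterate n

end RhoFK

section Dichotomy

def IsFKSmall (T : X → X) (ε : ℝ) (U : Set X) : Prop :=
  ∀ a ∈ U, ∀ b ∈ U, rhoFK T a b ≤ ε

lemma IsFKSmall.mono {U V : Set X} (h : IsFKSmall T ε U) (hVU : V ⊆ U) : IsFKSmall T ε V :=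
  fun a ha b hb => h a (hVU ha) b (hVU hb)

lemma IsFKSmall.of_le {U : Set X} (h : IsFKSmall T ε U) (hε : ε ≤ ε') : IsFKSmall T ε' U :=
  fun a ha b hb => (h a ha b hb).trans hε

lemma IsFKSmall.preimage_iterate {U : Set X} (h : IsFKSmall T ε U) (n : ℕ) :
    IsFKSmall T ε (T^[n] ⁻¹' U) :=
  fun _ ha _ hb => (rhoFK_le_rhoFK_iterate n).trans (h _ ha _ hb)

lemma not_fkSensitive_iff :
    ¬ FKSensitive T ↔ ∀ ε > 0, ∃ U : Set X, IsOpen U ∧ U.Nonempty ∧ IsFKSmall T ε U := by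
  simp only [FKSensitive, IsFKSmall, not_exists, not_and, not_forall, not_lt, exists_prop]

lemma FKSensitive.not_fkContinuityPoint (h : FKSensitive T) (x : X) :
    ¬ FKContinuityPoint T x := by
  intro hx
  obtain ⟨ε, hε, hsens⟩ := h
  obtain ⟨δ, hδ, hcont⟩ := hx (ε / 3) (by positivity)
  obtain ⟨a, ha, b, hb, hab⟩ := hsens (Metric.ball x δ) Metric.isOpen_ball
    ⟨x, Metric.mem_ball_self hδ⟩
  have hxa := hcont a (Metric.mem_ball'.1 ha).le
  have hxb := hcont b (Metric.mem_ball'.1 hb).le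
  have : rhoFK T a b ≤ ε / 3 + ε / 3 :=
    calc rhoFK T a b ≤ rhoFK T a x + rhoFK T x b := rhoFK_triangle
      _ = rhoFK T x a + rhoFK T x b := by rw [rhoFK_comm]
      _ ≤ ε / 3 + ε / 3 := add_le_add hxa hxb
  linarith

lemma fkContinuityPoint_of_forall_isFKSmall (h : ∀ ε > 0, ∃ U ∈ 𝓝 x, IsFKSmall T ε U) :
    FKContinuityPoint T x := by
  intro ε hε
  obtain ⟨U, hU, hsmall⟩ := h ε hε
  obtain ⟨r, hr, hball⟩ := Metric.mem_nhds_iff.1 hU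
  refine ⟨r / 2, half_pos hr, fun y hy => hsmall x (hball (Metric.mem_ball_self hr)) y ?_⟩
  exact hball (Metric.closedBall_subset_ball (half_lt_self hr) (Metric.mem_closedBall'.2 hy))

lemma dense_sUnion_isFKSmall (hT : Continuous T) (htr : IsTransitive T)
    (hns : ¬ FKSensitive T) (hε : 0 < ε) :
    Dense (⋃₀ {U : Set X | IsOpen U ∧ IsFKSmall T ε U}) := by
  refine dense_iff_inter_open.2 fun V hV hVne => ?_
  obtain ⟨U, hU, hUne, hsmall⟩ := not_fkSensitive_iff.1 hns ε hε
  obtain ⟨n, -, w, hwU, hwV⟩ := htr U V hU hV hUne hVne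
  exact ⟨w, hwV, V ∩ T^[n] ⁻¹' U, ⟨hV.inter ((hT.iterate n).isOpen_preimage U hU),
    (hsmall.preimage_iterate n).mono inter_subset_right⟩, hwV, hwU⟩

lemma eqFK_mem_residual (hT : Continuous T) (htr : IsTransitive T) (hns : ¬ FKSensitive T) :
    EqFK T ∈ residual X := by
  have hG : ∀ k : ℕ, ⋃₀ {U : Set X | IsOpen U ∧ IsFKSmall T (1 / (k + 1)) U} ∈ residual X :=
    fun k => residual_of_dense_open (isOpen_sUnion fun _ hU => hU.1)
      (dense_sUnion_isFKSmall hT htr hns (by positivity))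
  refine mem_of_superset (countable_iInter_mem.2 hG) fun x hx =>
    fkContinuityPoint_of_forall_isFKSmall fun ε hε => ?_
  obtain ⟨k, hk⟩ := exists_nat_one_div_lt hε
  obtain ⟨U, ⟨hU, hsmall⟩, hxU⟩ := mem_iInter.1 hx k
  exact ⟨U, hU.mem_nhds hxU, hsmall.of_le hk.le⟩

lemma fkContinuityPoint_of_isMinimal (hT : Continuous T) (hmin : IsMinimal T)
    (hns : ¬ FKSensitive T) (x : X) : FKContinuityPoint T x :=
  fkContinuityPoint_of_forall_isFKSmall fun ε hε => by
    obtain ⟨U, hU, hUne, hsmall⟩ := not_fkSensitive_iff.1 hns ε hε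
    obtain ⟨_, ⟨n, rfl⟩, hxU⟩ := (hmin x).exists_mem_open hU hUne
    exact ⟨T^[n] ⁻¹' U, (hT.iterate n).continuousAt.preimage_mem_nhds (hU.mem_nhds hxU),
      hsmall.preimage_iterate n⟩

end Dichotomy

end FKPaper

/-- Auslander–Yorke dichotomy for `ρ_FK`: a transitive TDS is almost
FK-continuous iff it is not FK-sensitive; a minimal TDS is FK-continuous iff it is
not FK-sensitive. -/
theorem auslander_yorke_FK {X : Type*} [MetricSpace X] [CompactSpace X] [Nonempty X]
    (T : X → X) (hT : Continuous T) :
    (IsTransitive T → ((EqFK T ∈ residual X) ↔ ¬ FKSensitive T)) ∧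
    (IsMinimal T → ((∀ x : X, FKContinuityPoint T x) ↔ ¬ FKSensitive T)) := by
  refine ⟨fun htr => ⟨fun hres hsens => ?_, eqFK_mem_residual hT htr⟩,
    fun hmin => ⟨fun hall hsens => ?_, fun hns => fkContinuityPoint_of_isMinimal hT hmin hns⟩⟩
  · obtain ⟨x, hx⟩ := (dense_of_mem_residual hres).nonempty
    exact hsens.not_fkContinuityPoint x hx
  · exact hsens.not_fkContinuityPoint _ (hall (Classical.arbitrary X))
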